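/- For the G₂ datum (P₂, 1/6, P₁, 1/10): with χ = (1/6 − 1/2)·3ϖ₂ + (1/2)(2ϖ₁+2ϖ₂) = ϖ₁ + 0·ϖ₂ written in fundamental weight coordinates of G₂, there exists a Weyl element w (namely w = s₁, the simple reflection in α₁) with w(χ_{P₂,1/6}) = χ_{P₁,1/10}, i.e., s₁((1/6−1/2)·3ϖ₂ + ϖ₁+ϖ₂) = (1/10−1/2)·5ϖ₁ + ϖ₁+ϖ₂. -/
import Mathlib


/-- First fundamental weight of `G₂` (in fundamental-weight coordinates). -/
def G2w1 : ℝ × ℝ := (1, 0)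

/-- Second fundamental weight of `G₂`. -/
def G2w2 : ℝ × ℝ := (0, 1)

/-- The simple root `α₁ = 2ϖ₁ − ϖ₂` of `G₂`. -/
def G2a1 : ℝ × ℝ := (2, -1)

/-- The simple reflection `s₁` in `α₁`, acting on the weight space by
`s₁(λ) = λ − ⟨λ, α₁^∨⟩ α₁` (in fundamental-weight coordinates `⟨λ, α₁^∨⟩ = λ.1`). -/
def G2s1 (v : ℝ × ℝ) : ℝ × ℝ := v - v.1 • G2a1

/-- For the `G₂` admissible datum `(P₂, 1/6, P₁, 1/10)`: there is a Weyl element `w`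
(namely `w = s₁`) with `w(χ_{P₂,1/6}) = χ_{P₁,1/10}`, i.e.
`s₁((1/6 − 1/2)·3ϖ₂ + (1/2)(2ϖ₁ + 2ϖ₂)) = (1/10 − 1/2)·5ϖ₁ + (1/2)(2ϖ₁ + 2ϖ₂)`. -/
theorem g2_admissible_datum :
    G2s1 ((1/6 - 1/2 : ℝ) • ((3 : ℝ) • G2w2)
        + (1/2 : ℝ) • ((2 : ℝ) • G2w1 + (2 : ℝ) • G2w2))
      = (1/10 - 1/2 : ℝ) • ((5 : ℝ) • G2w1)
        + (1/2 : ℝ) • ((2 : ℝ) • G2w1 + (2 : ℝ) • G2w2) := by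
  simp [G2s1, G2w1, G2w2, G2a1, Prod.ext_iff, Prod.smul_def]; norm_num
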